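/- For odd natural numbers a, two-pile Nim with a pass (a, a+1)* is a P-position. -/

import Mathlib

/-- Finite impartial games, given by their (finite list of) options. -/
inductive IGame : Type where
  | mk : List IGame → IGame

/-- The empty game `E`, with no options. -/
abbrev E : IGame := .mk []

/-- The list of options of a game. -/
def IGame.opts : IGame → List IGame
  | .mk l => l

theorem IGame.sizeOf_lt_of_mem {g : IGame} {l : List IGame} (h : g ∈ l) :
    sizeOf g < sizeOf (IGame.mk l) := by
  have := List.sizeOf_lt_of_mem h
  simp only [IGame.mk.sizeOf_spec]; omega

/-- The pass operator: `E* = E`; for `G` with options, `G*` has options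
`G` together with `g*` for each option `g` of `G`. -/
def pass : IGame → IGame
  | .mk [] => .mk []
  | .mk l => .mk (.mk l :: l.attach.map fun g => pass g.1)
decreasing_by
  exact IGame.sizeOf_lt_of_mem g.2

/-- The split sum `G ∘ H`. -/
def split : IGame → IGame → IGame
  | .mk [], _ => .mk []
  | .mk gs, .mk [] => .mk gs
  | .mk gs, .mk hs =>
      .mk ((hs.attach.map fun h => split (.mk gs) h.1) ++
           (gs.attach.map fun g => split g.1 (.mk hs)))
termination_by G H => sizeOf G + sizeOf H
decreasing_by
  · have := IGame.sizeOf_lt_of_mem h.2; omega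
  · have := IGame.sizeOf_lt_of_mem g.2; omega

/-- Disjunctive sum of games. -/
def addG : IGame → IGame → IGame
  | .mk gs, .mk hs =>
      .mk ((gs.attach.map fun g => addG g.1 (.mk hs)) ++
           (hs.attach.map fun h => addG (.mk gs) h.1))
termination_by G H => sizeOf G + sizeOf H
decreasing_by
  · have := IGame.sizeOf_lt_of_mem g.2; omega
  · have := IGame.sizeOf_lt_of_mem h.2; omega

/-- The nimber `*n`, with options `*0, …, *(n-1)`. -/
def star : ℕ → IGame
  | n => .mk ((List.range n).attach.map fun k => star k.1)
termination_by n => n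
decreasing_by have := List.mem_range.mp k.2; omega

/-- `G` is a P-position (previous player wins under normal play):
every option is an N-position. -/
def PPos : IGame → Prop
  | .mk l => ∀ g ∈ l.attach, ¬ PPos g.1
decreasing_by exact IGame.sizeOf_lt_of_mem g.2

/-- Identity of game trees (extensionally: same set of options, recursively). -/
def Ident : IGame → IGame → Prop
  | .mk gs, .mk hs =>
      (∀ g ∈ gs.attach, ∃ h ∈ hs.attach, Ident g.1 h.1) ∧
      (∀ h ∈ hs.attach, ∃ g ∈ gs.attach, Ident g.1 h.1)
termination_by G H => sizeOf G + sizeOf H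
decreasing_by
  · have := IGame.sizeOf_lt_of_mem g.2
    have := IGame.sizeOf_lt_of_mem h.2; omega
  · have := IGame.sizeOf_lt_of_mem g.2
    have := IGame.sizeOf_lt_of_mem h.2; omega


/-! The P-positions of a game are the unique predicate `P` on positions with `P x ↔ C x ∧ no
option of x satisfies P`, for `C = True`; any predicate obeying the same recursion over a
well-founded move relation coincides with it. In `(m, n)*` the pass adds `(m, n)` itself as an
option, so `(m, n)*` is P iff `(m, n)` is not (that is, `m ≠ n`, or `(m, n) = (0, 0)` where no pass
exists) and no `(k, l)*` with `(k, l)` a Nim move from `(m, n)` is P. Since the P-positions of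
two-pile Nim are the diagonal, the closed form `{(0, 0)} ∪ {(2k+1, 2k+2), (2k+2, 2k+1)}` obeys
this recursion, and `(a, a+1)` with `a` odd belongs to it. -/

theorem IGame.PPos_iff (G : IGame) : PPos G ↔ ∀ g ∈ G.opts, ¬ PPos g := by
  cases G
  rw [PPos]
  simp [IGame.opts]

theorem IGame.opts_addG (G H : IGame) :
    (addG G H).opts = G.opts.map (addG · H) ++ H.opts.map (addG G ·) := by
  obtain ⟨gs⟩ := G; obtain ⟨hs⟩ := H
  rw [addG, List.attach_map_val (f := fun g => addG g _), List.attach_map_val (f := addG _)]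
  rfl

theorem IGame.opts_star (n : ℕ) : IGame.opts (star n) = (List.range n).map star := by
  rw [star.eq_1, List.attach_map_val]
  rfl

theorem pass_of_opts_eq_nil {G : IGame} (hG : G.opts = []) : pass G = G := by
  obtain ⟨_ | _⟩ := G
  · exact pass.eq_1
  · simp [IGame.opts] at hG

theorem IGame.opts_pass_of_ne_nil {G : IGame} (hG : G.opts ≠ []) :
    (pass G).opts = G :: G.opts.map pass := by
  obtain ⟨l⟩ := G
  rw [pass.eq_2 l hG, List.attach_map_val]
  rfl

theorem PPos_pass_iff (G : IGame) :
    PPos (pass G) ↔ (PPos G → G.opts = []) ∧ ∀ g ∈ G.opts, ¬ PPos (pass g) := by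
  by_cases hG : G.opts = []
  · simp [pass_of_opts_eq_nil hG, IGame.PPos_iff G, hG]
  · rw [IGame.PPos_iff (pass G), IGame.opts_pass_of_ne_nil hG]
    simp [hG]

theorem WellFounded.kernel_unique {α : Type*} {r : α → α → Prop} (hr : WellFounded r)
    {C P Q : α → Prop} (hP : ∀ x, P x ↔ C x ∧ ∀ y, r y x → ¬ P y)
    (hQ : ∀ x, Q x ↔ C x ∧ ∀ y, r y x → ¬ Q y) (x : α) : P x ↔ Q x := by
  induction x using hr.induction with
  | _ x ih =>
    rw [hP, hQ]
    exact and_congr_right fun _ => forall₂_congr fun y hy => by rw [ih y hy]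

def NimMove (p q : ℕ × ℕ) : Prop :=
  (p.1 < q.1 ∧ p.2 = q.2) ∨ (p.1 = q.1 ∧ p.2 < q.2)

theorem nimMove_mk_mk {k l m n : ℕ} :
    NimMove (k, l) (m, n) ↔ (k < m ∧ l = n) ∨ (k = m ∧ l < n) :=
  Iff.rfl

theorem wellFounded_nimMove : WellFounded NimMove :=
  Subrelation.wf (fun {p q} h => show p.1 + p.2 < q.1 + q.2 by unfold NimMove at h; omega)
    (measure fun p : ℕ × ℕ => p.1 + p.2).wf

def twoPile (p : ℕ × ℕ) : IGame := addG (star p.1) (star p.2)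

theorem mem_opts_twoPile {p : ℕ × ℕ} {g : IGame} :
    g ∈ (twoPile p).opts ↔ ∃ q, NimMove q p ∧ twoPile q = g := by
  obtain ⟨m, n⟩ := p
  simp only [twoPile, IGame.opts_addG, IGame.opts_star, List.map_map, List.mem_append,
    List.mem_map, List.mem_range, NimMove, Prod.exists]
  aesop

theorem opts_twoPile_eq_nil_iff {p : ℕ × ℕ} : (twoPile p).opts = [] ↔ p = (0, 0) := by
  obtain ⟨m, n⟩ := p
  simp [twoPile, IGame.opts_addG, IGame.opts_star]

theorem PPos_twoPile_iff_forall_nimMove (p : ℕ × ℕ) :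
    PPos (twoPile p) ↔ ∀ q, NimMove q p → ¬ PPos (twoPile q) := by
  rw [IGame.PPos_iff]
  simp only [mem_opts_twoPile, forall_exists_index, and_imp, forall_apply_eq_imp_iff₂]

theorem PPos_pass_twoPile_iff_forall_nimMove (p : ℕ × ℕ) :
    PPos (pass (twoPile p)) ↔
      (PPos (twoPile p) → p = (0, 0)) ∧ ∀ q, NimMove q p → ¬ PPos (pass (twoPile q)) := by
  rw [PPos_pass_iff]
  simp only [opts_twoPile_eq_nil_iff, mem_opts_twoPile, forall_exists_index, and_imp,
    forall_apply_eq_imp_iff₂]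

theorem PPos_twoPile_iff (p : ℕ × ℕ) : PPos (twoPile p) ↔ p.1 = p.2 := by
  refine wellFounded_nimMove.kernel_unique (C := fun _ => True) (Q := fun p => p.1 = p.2)
    (fun p => by rw [true_and]; exact PPos_twoPile_iff_forall_nimMove p) (fun p => ?_) p
  obtain ⟨m, n⟩ := p
  simp only [true_and, Prod.forall]
  refine ⟨fun h k l hkl => ?_, fun h => ?_⟩
  · simp only [nimMove_mk_mk] at hkl; omega
  · have h₁ := h (min m n) n
    have h₂ := h m (min m n)
    simp only [nimMove_mk_mk, and_true, true_and] at h₁ h₂; omega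

def IsPassPPos (p : ℕ × ℕ) : Prop :=
  p = (0, 0) ∨ (Odd p.1 ∧ p.2 = p.1 + 1) ∨ (Odd p.2 ∧ p.1 = p.2 + 1)

theorem PPos_pass_twoPile_iff (p : ℕ × ℕ) : PPos (pass (twoPile p)) ↔ IsPassPPos p := by
  refine wellFounded_nimMove.kernel_unique (C := fun p => p.1 = p.2 → p = (0, 0))
    (Q := IsPassPPos)
    (fun p => by rw [← PPos_twoPile_iff]; exact PPos_pass_twoPile_iff_forall_nimMove p) (fun p => ?_) p
  obtain ⟨m, n⟩ := p
  simp only [IsPassPPos, nimMove_mk_mk, Prod.forall, Prod.mk.injEq, Nat.odd_iff]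
  refine ⟨fun h => ⟨by omega, fun k l hkl => by omega⟩, fun ⟨h₀, h⟩ => ?_⟩
  -- at `m = 0` (resp. `n = 0`) the truncated `m - 1` makes the move to `(0, 0)`
  have h₁ := h m (m + 1)
  have h₂ := h m (m - 1)
  have h₃ := h (n + 1) n
  have h₄ := h (n - 1) n
  omega

/-- for odd `a`, two-pile Nim with a pass `(a, a+1)*` is a
P-position. -/
theorem two_pile_pass_PPos (a : ℕ) (ha : Odd a) :
    PPos (pass (addG (star a) (star (a + 1)))) :=
  (PPos_pass_twoPile_iff (a, a + 1)).2 (Or.inr (Or.inl ⟨ha, rfl⟩))
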